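/- Let Γ ⊆ P_si(Σ^k) be a set of shift-invariant measures. For every ω ∈ B(Γ) with |ω| ≥ k, the word obtained by removing the last k−1 letters of ω is generated by a cycle in the essential graph G_ess(Γ); consequently B(Γ) ⊆ L(G_ess(Γ)). -/

import Mathlib

open Finset

def occCount {A : Type*} [DecidableEq A] (k : ℕ) (ω : List A) (φ : Fin k → A) : ℕ :=
  ((Finset.range (ω.length - k + 1)).filter
    (fun i => ∀ j : Fin k, ω[i + (j : ℕ)]? = some (φ j))).card

noncomputable def freq {A : Type*} [DecidableEq A] (k : ℕ) (ω : List A) (φ : Fin k → A) : ℝ :=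
  (occCount k ω φ : ℝ) / ((ω.length - k + 1 : ℕ) : ℝ)

def IsProbVec {A : Type*} [Fintype A] {k : ℕ} (η : (Fin k → A) → ℝ) : Prop :=
  (∀ φ, 0 ≤ η φ) ∧ ∑ φ : Fin k → A, η φ = 1

def ShiftInv {A : Type*} [Fintype A] (k : ℕ) (η : (Fin (k + 2) → A) → ℝ) : Prop :=
  ∀ ψ : Fin (k + 1) → A, ∑ a : A, η (Fin.cons a ψ) = ∑ a : A, η (Fin.snoc ψ a)

def genFrom {A V : Type*} (E : V → V → A → Prop) (ω : List A) : Prop :=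
  ∃ f : Fin (ω.length + 1) → V, ∀ i : Fin ω.length, E (f i.castSucc) (f i.succ) (ω.get i)

noncomputable def capacity {A : Type*} (T : Set (List A)) : ℝ :=
  Filter.atTop.limsup fun n : ℕ =>
    Real.logb 2 (Nat.card {ω : List A // ω ∈ T ∧ ω.length = n}) / n

def memGammaEps {A : Type*} [Fintype A] [DecidableEq A] {k : ℕ}
    (Γ : Set ((Fin k → A) → ℝ)) (ε : ℝ) (η : (Fin k → A) → ℝ) : Prop :=
  IsProbVec η ∧ ∃ δ, ε < δ ∧ ∀ μ : (Fin k → A) → ℝ, IsProbVec μ → μ ∉ Γ → δ ≤ ‖η - μ‖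

/-- The labeled edge relation of the essential graph `G_ess(Γ)`: an edge from `u`
to `v` labeled `a` whenever some `η ∈ Γ` with at least one admissible word
(i.e. `η ∈ ess(Γ)`) assigns positive mass to a `k`-tuple `φ` whose
`(k-1)`-prefix is `u`, whose `(k-1)`-suffix is `v`, and whose first letter is `a`. -/
def essEdge {A : Type*} [Fintype A] [DecidableEq A] {k : ℕ}
    (Γ : Set ((Fin (k + 2) → A) → ℝ)) (u v : Fin (k + 1) → A) (a : A) : Prop :=
  ∃ η ∈ Γ, (∃ ω' : List A, k + 2 ≤ ω'.length ∧ ∀ φ, freq (k + 2) ω' φ = η φ) ∧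
    ∃ φ : Fin (k + 2) → A, 0 < η φ ∧
      u = (fun j : Fin (k + 1) => φ j.castSucc) ∧
      v = (fun j : Fin (k + 1) => φ j.succ) ∧ a = φ 0

/-!
Let `m = |ω| - (k + 1)`. Summed over the letter `a`, the occurrences of the `(k + 2)`-words
`a ψ` in `ω` count the occurrences of the `(k + 1)`-word `ψ` at the positions `1, …, m`, and
those of `ψ a` count them at the positions `0, …, m - 1`. Shift invariance of the empirical
frequency vector equates the two counts, so the prefix of `ω` of length `k + 1` occurs again at
position `m`: `ω` is `m`-periodic. Every `(k + 2)`-window of its periodic extension `c` occurs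
in `ω`, hence has positive frequency and is an edge of the essential graph, so the windows
`c[i, i + k]` form a walk labelled by `ω` that is back at its start after `m` steps.
-/

section Occurrences

variable {A : Type*}

def OccursAt {k : ℕ} (ω : List A) (φ : Fin k → A) (i : ℕ) : Prop :=
  ∀ j : Fin k, ω[i + (j : ℕ)]? = some (φ j)

instance [DecidableEq A] {k : ℕ} (ω : List A) (φ : Fin k → A) :
    DecidablePred (OccursAt ω φ) :=
  fun _ => inferInstanceAs (Decidable (∀ _, _))

theorem occCount_eq_count [DecidableEq A] {k : ℕ} (ω : List A) (φ : Fin k → A) :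
    occCount k ω φ = Nat.count (OccursAt ω φ) (ω.length - k + 1) := by
  rw [Nat.count_eq_card_filter_range]
  rfl

theorem occursAt_cons_iff {k : ℕ} {ω : List A} {a : A} {ψ : Fin k → A} {i : ℕ} :
    OccursAt ω (Fin.cons a ψ : Fin (k + 1) → A) i ↔ ω[i]? = some a ∧ OccursAt ω ψ (i + 1) := by
  simp only [OccursAt, Fin.forall_fin_succ, Fin.cons_zero, Fin.cons_succ, Fin.val_zero,
    Fin.val_succ, add_zero, Nat.add_right_comm _ 1, ← add_assoc]

theorem occursAt_snoc_iff {k : ℕ} {ω : List A} {a : A} {ψ : Fin k → A} {i : ℕ} :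
    OccursAt ω (Fin.snoc ψ a : Fin (k + 1) → A) i ↔ OccursAt ω ψ i ∧ ω[i + k]? = some a := by
  simp only [OccursAt, Fin.forall_fin_succ', Fin.snoc_castSucc, Fin.snoc_last,
    Fin.val_castSucc, Fin.val_last]

theorem sum_card_filter_getElem?_eq_some_and [Fintype A] [DecidableEq A] (ω : List A)
    (g : ℕ → ℕ) (p : ℕ → Prop) [DecidablePred p] {s : Finset ℕ}
    (hg : ∀ i ∈ s, g i < ω.length) :
    ∑ a : A, #{i ∈ s | ω[g i]? = some a ∧ p i} = #{i ∈ s | p i} := by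
  simp only [Finset.card_filter]
  rw [Finset.sum_comm]
  refine Finset.sum_congr rfl fun i hi => ?_
  rw [List.getElem?_eq_getElem (hg i hi)]
  simp [ite_and]

theorem sum_occCount_cons [Fintype A] [DecidableEq A] {k : ℕ} {ω : List A}
    (hk : k < ω.length) (ψ : Fin k → A) :
    ∑ a : A, occCount (k + 1) ω (Fin.cons a ψ) =
      Nat.count (fun i => OccursAt ω ψ (i + 1)) (ω.length - k) := by
  simp only [occCount_eq_count, Nat.count_eq_card_filter_range, occursAt_cons_iff]
  rw [show ω.length - (k + 1) + 1 = ω.length - k by omega]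
  exact sum_card_filter_getElem?_eq_some_and ω id _ fun i hi => by
    rw [Finset.mem_range] at hi; exact (by omega : i < ω.length)

theorem sum_occCount_snoc [Fintype A] [DecidableEq A] {k : ℕ} {ω : List A}
    (hk : k < ω.length) (ψ : Fin k → A) :
    ∑ a : A, occCount (k + 1) ω (Fin.snoc ψ a) = Nat.count (OccursAt ω ψ) (ω.length - k) := by
  simp only [occCount_eq_count, Nat.count_eq_card_filter_range, occursAt_snoc_iff,
    and_comm (a := OccursAt ω ψ _)]
  rw [show ω.length - (k + 1) + 1 = ω.length - k by omega]
  exact sum_card_filter_getElem?_eq_some_and ω (· + k) _ fun i hi => by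
    rw [Finset.mem_range] at hi; omega

theorem freq_pos_of_occursAt [DecidableEq A] {k : ℕ} {ω : List A} {φ : Fin k → A} {i : ℕ}
    (hi : i < ω.length - k + 1) (hφ : OccursAt ω φ i) : 0 < freq k ω φ := by
  have : 0 < occCount k ω φ := by
    rw [occCount_eq_count, Nat.count_eq_card_filter_range, Finset.card_pos]
    exact ⟨i, Finset.mem_filter.2 ⟨Finset.mem_range.2 hi, hφ⟩⟩
  unfold freq
  positivity

end Occurrences

theorem List.getElem?_eq_getElem?_mod {α : Type*} {l : List α} {m : ℕ} (hm : 0 < m)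
    (hper : ∀ j, m + j < l.length → l[m + j]? = l[j]?) :
    ∀ x < l.length, l[x]? = l[x % m]? := by
  intro x
  induction x using Nat.strong_induction_on with
  | _ x ih =>
    intro hx
    rcases lt_or_ge x m with hxm | hxm
    · rw [Nat.mod_eq_of_lt hxm]
    · obtain ⟨j, rfl⟩ := Nat.exists_eq_add_of_le hxm
      rw [hper j hx, ih j (by omega) (by omega), Nat.add_mod_left]

section ShiftInvariant

variable {A : Type*} [Fintype A] [DecidableEq A] {k : ℕ} {ω : List A}

theorem sum_occCount_cons_eq_sum_occCount_snoc (hinv : ShiftInv k (freq (k + 2) ω))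
    (ψ : Fin (k + 1) → A) :
    ∑ a : A, occCount (k + 2) ω (Fin.cons a ψ) = ∑ a : A, occCount (k + 2) ω (Fin.snoc ψ a) := by
  have h := hinv ψ
  simp only [freq, ← Finset.sum_div] at h
  rw [div_left_inj' (by positivity)] at h
  exact_mod_cast h

theorem occursAt_sub_of_occursAt_zero (hinv : ShiftInv k (freq (k + 2) ω))
    (hlen : k + 2 ≤ ω.length) {ψ : Fin (k + 1) → A} (h0 : OccursAt ω ψ 0) :
    OccursAt ω ψ (ω.length - (k + 1)) := by
  have hcount := sum_occCount_cons_eq_sum_occCount_snoc hinv ψ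
  rw [sum_occCount_cons (by omega), sum_occCount_snoc (by omega)] at hcount
  have hfirst := Nat.count_succ' (OccursAt ω ψ) (ω.length - (k + 1))
  have hlast := Nat.count_succ (OccursAt ω ψ) (ω.length - (k + 1))
  rw [if_pos h0] at hfirst
  by_contra hm
  rw [if_neg hm] at hlast
  omega

theorem getElem?_eq_getElem?_mod_of_shiftInv (hinv : ShiftInv k (freq (k + 2) ω))
    (hlen : k + 2 ≤ ω.length) :
    ∀ x < ω.length, ω[x]? = ω[x % (ω.length - (k + 1))]? := by
  refine List.getElem?_eq_getElem?_mod (by omega) fun j hj => ?_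
  have hpre := occursAt_sub_of_occursAt_zero hinv hlen
    (ψ := fun j : Fin (k + 1) => ω[(j : ℕ)]) fun j => by simp
  exact (hpre ⟨j, by omega⟩).trans (List.getElem?_eq_getElem _).symm

theorem essEdge_of_occursAt {Γ : Set ((Fin (k + 2) → A) → ℝ)} (hlen : k + 2 ≤ ω.length)
    (hmem : freq (k + 2) ω ∈ Γ) {φ : Fin (k + 2) → A} {i : ℕ}
    (hi : i < ω.length - (k + 2) + 1) (hφ : OccursAt ω φ i) :
    essEdge Γ (fun j => φ j.castSucc) (fun j => φ j.succ) (φ 0) :=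
  ⟨_, hmem, ⟨ω, hlen, fun _ => rfl⟩, φ, freq_pos_of_occursAt hi hφ, rfl, rfl, rfl⟩

theorem exists_periodic_extension (hinv : ShiftInv k (freq (k + 2) ω))
    (hlen : k + 2 ≤ ω.length) :
    ∃ c : ℕ → A, (∀ x, c x = c (x % (ω.length - (k + 1)))) ∧
      ∀ x < ω.length, ω[x]? = some (c x) := by
  have hm : 0 < ω.length - (k + 1) := by omega
  refine ⟨fun x => ω[x % (ω.length - (k + 1))]'((Nat.mod_lt x hm).trans_le (by omega)),
    fun x => by simp only [Nat.mod_mod], fun x hx => ?_⟩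
  exact (getElem?_eq_getElem?_mod_of_shiftInv hinv hlen x hx).trans (List.getElem?_eq_getElem _)

theorem essEdge_of_periodic_extension {Γ : Set ((Fin (k + 2) → A) → ℝ)}
    (hlen : k + 2 ≤ ω.length) (hmem : freq (k + 2) ω ∈ Γ) {c : ℕ → A}
    (hper : ∀ x, c x = c (x % (ω.length - (k + 1))))
    (hc : ∀ x < ω.length, ω[x]? = some (c x)) (i : ℕ) :
    essEdge Γ (fun j => c (i + j)) (fun j => c (i + 1 + j)) (c i) := by
  have hm := Nat.mod_lt i (show 0 < ω.length - (k + 1) by omega)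
  have hocc : OccursAt ω (fun j : Fin (k + 2) => c (i + j)) (i % (ω.length - (k + 1))) :=
    fun j => by rw [hc _ (by omega), hper, Nat.mod_add_mod, ← hper]
  convert essEdge_of_occursAt hlen hmem (by omega) hocc using 2 <;> simp [add_assoc, add_comm 1]

end ShiftInvariant

theorem stmt15 {A : Type*} [Fintype A] [DecidableEq A] (k : ℕ)
    (Γ : Set ((Fin (k + 2) → A) → ℝ))
    (hΓ : ∀ η ∈ Γ, IsProbVec η ∧ ShiftInv k η)
    (ω : List A) (hlen : k + 2 ≤ ω.length) (hmem : freq (k + 2) ω ∈ Γ) :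
    (∃ f : Fin ((ω.take (ω.length - (k + 1))).length + 1) → (Fin (k + 1) → A),
      (∀ i : Fin (ω.take (ω.length - (k + 1))).length,
        essEdge Γ (f i.castSucc) (f i.succ) ((ω.take (ω.length - (k + 1))).get i)) ∧
      f 0 = f (Fin.last _)) ∧
    genFrom (essEdge Γ) ω := by
  obtain ⟨c, hper, hc⟩ := exists_periodic_extension (hΓ _ hmem).2 hlen
  have hedge := essEdge_of_periodic_extension hlen hmem hper hc
  have hget : ∀ i (hi : i < ω.length), ω[i] = c i := fun i hi => by
    simpa [List.getElem?_eq_getElem hi] using hc i hi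
  have htake : (ω.take (ω.length - (k + 1))).length = ω.length - (k + 1) := by
    simp only [List.length_take]; omega
  refine ⟨⟨fun i j => c (i + j), fun i => ?_, ?_⟩, fun i j => c (i + j), fun i => ?_⟩
  · simpa [hget] using hedge i
  · funext j
    simp only [Fin.val_zero, zero_add, Fin.val_last, htake]
    rw [hper, hper (_ + _), Nat.add_mod_left]
  · simpa [hget] using hedge i
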